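/- arXiv:2502.08456 — 3 statements merged into one kernel-verified Lean document; each statement's English description precedes it below -/
import Mathlib

section
/- Olsen's Hölder inequality in Morrey spaces: let 1 ≤ p, q < ∞ with 1/p + 1/q ≥ 1, let 0 ≤ λ, μ ≤ n, and define r and ν by 1/r = 1/p + 1/q and ν/r = λ/p + μ/q. Then for all f ∈ L^{p,λ}(ℝⁿ) and g ∈ L^{q,μ}(ℝⁿ), the product fg belongs to L^{r,ν}(ℝⁿ) and ‖fg‖_{L^{r,ν}} ≤ ‖f‖_{L^{p,λ}} ‖g‖_{L^{q,μ}}. -/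
open MeasureTheory ENNReal

/-- Classical Morrey norm `sup_{x,r>0} r^{-λ/p} ‖f χ_{B(x,r)}‖_{L^p}`. -/
noncomputable def morreyNorm (n : ℕ) (p lam : ℝ) (f : (Fin n → ℝ) → ℝ) : ℝ≥0∞ :=
  ⨆ (x : Fin n → ℝ) (r : ℝ) (_ : 0 < r),
    ENNReal.ofReal (r ^ (-(lam / p))) *
      eLpNorm ((Metric.ball x r).indicator f) (ENNReal.ofReal p) volume

/-! On each ball `B`, Hölder's inequality with `1/r = 1/p + 1/q` gives
`‖fg χ_B‖_r ≤ ‖f χ_B‖_p ‖g χ_B‖_q`, and since `ν/r = λ/p + μ/q` the weight splits as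
`R^{-ν/r} = R^{-λ/p} R^{-μ/q}`; each factor is then bounded by the corresponding Morrey norm. -/

lemma ENNReal.holderTriple_ofReal {p q r : ℝ} (hp : 0 < p) (hq : 0 < q)
    (hr : 1 / r = 1 / p + 1 / q) :
    HolderTriple (ENNReal.ofReal p) (ENNReal.ofReal q) (ENNReal.ofReal r) := by
  have hr0 : 0 < r := one_div_pos.mp (hr ▸ by positivity)
  constructor
  rw [← ofReal_inv_of_pos hr0, ← ofReal_inv_of_pos hp, ← ofReal_inv_of_pos hq,
    ← ofReal_add (by positivity) (by positivity)]
  simpa only [one_div] using congrArg ENNReal.ofReal hr.symm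

lemma eLpNorm_indicator_mul_le {α 𝕜 : Type*} [MeasurableSpace α] [NormedRing 𝕜]
    {μ : Measure α} {p q r : ℝ≥0∞} [HolderTriple p q r] {s : Set α} (hs : MeasurableSet s)
    {f g : α → 𝕜} (hf : AEStronglyMeasurable f μ) (hg : AEStronglyMeasurable g μ) :
    eLpNorm (s.indicator fun x => f x * g x) r μ ≤
      eLpNorm (s.indicator f) p μ * eLpNorm (s.indicator g) q μ := by
  rw [Set.indicator_mul]
  exact eLpNorm_smul_le_mul_eLpNorm (𝕜 := 𝕜) (hg.indicator hs) (hf.indicator hs)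

lemma le_morreyNorm {n : ℕ} {p lam R : ℝ} (f : (Fin n → ℝ) → ℝ) (x : Fin n → ℝ) (hR : 0 < R) :
    ENNReal.ofReal (R ^ (-(lam / p))) *
        eLpNorm ((Metric.ball x R).indicator f) (ENNReal.ofReal p) volume ≤
      morreyNorm n p lam f :=
  le_iSup_of_le x (le_iSup_of_le R (le_iSup_of_le hR le_rfl))

lemma morreyNorm_mul_le {n : ℕ} {p q r lam mu nu : ℝ} (hp : 0 < p) (hq : 0 < q)
    (hr : 1 / r = 1 / p + 1 / q) (hnu : nu / r = lam / p + mu / q)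
    {f g : (Fin n → ℝ) → ℝ} (hf : AEStronglyMeasurable f volume)
    (hg : AEStronglyMeasurable g volume) :
    morreyNorm n r nu (fun x => f x * g x) ≤ morreyNorm n p lam f * morreyNorm n q mu g := by
  have := ENNReal.holderTriple_ofReal hp hq hr
  refine iSup_le fun x => iSup_le fun R => iSup_le fun hR => ?_
  have hweight : ENNReal.ofReal (R ^ (-(nu / r))) =
      ENNReal.ofReal (R ^ (-(lam / p))) * ENNReal.ofReal (R ^ (-(mu / q))) := by
    rw [← ofReal_mul (by positivity), ← Real.rpow_add hR, hnu, neg_add]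
  calc ENNReal.ofReal (R ^ (-(nu / r))) *
        eLpNorm ((Metric.ball x R).indicator fun y => f y * g y) (ENNReal.ofReal r) volume
      ≤ ENNReal.ofReal (R ^ (-(lam / p))) * ENNReal.ofReal (R ^ (-(mu / q))) *
          (eLpNorm ((Metric.ball x R).indicator f) (ENNReal.ofReal p) volume *
            eLpNorm ((Metric.ball x R).indicator g) (ENNReal.ofReal q) volume) := by
        rw [hweight]
        gcongr
        exact eLpNorm_indicator_mul_le measurableSet_ball hf hg
    _ = (ENNReal.ofReal (R ^ (-(lam / p))) *
            eLpNorm ((Metric.ball x R).indicator f) (ENNReal.ofReal p) volume) *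
          (ENNReal.ofReal (R ^ (-(mu / q))) *
            eLpNorm ((Metric.ball x R).indicator g) (ENNReal.ofReal q) volume) := by ring
    _ ≤ morreyNorm n p lam f * morreyNorm n q mu g :=
        mul_le_mul' (le_morreyNorm f x hR) (le_morreyNorm g x hR)

theorem stmt_1_general (n : ℕ) (p q r lam mu nu : ℝ)
    (hp : 1 ≤ p) (hq : 1 ≤ q)
    (hr : 1 / r = 1 / p + 1 / q) (hnu : nu / r = lam / p + mu / q)
    (f g : (Fin n → ℝ) → ℝ)
    (hf : AEStronglyMeasurable f volume) (hg : AEStronglyMeasurable g volume)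
    (hfM : morreyNorm n p lam f < ∞) (hgM : morreyNorm n q mu g < ∞) :
    morreyNorm n r nu (fun x => f x * g x) < ∞ ∧
      morreyNorm n r nu (fun x => f x * g x) ≤
        morreyNorm n p lam f * morreyNorm n q mu g := by
  have hmul := morreyNorm_mul_le (by linarith) (by linarith) hr hnu hf hg
  exact ⟨hmul.trans_lt (mul_lt_top hfM hgM), hmul⟩

/-- Olsen's Hölder inequality in Morrey spaces. -/
theorem stmt_1 (n : ℕ) (p q r lam mu nu : ℝ)
    (hp : 1 ≤ p) (hq : 1 ≤ q) (hpq : 1 ≤ 1 / p + 1 / q)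
    (hlam : 0 ≤ lam) (hlamn : lam ≤ n) (hmu : 0 ≤ mu) (hmun : mu ≤ n)
    (hr : 1 / r = 1 / p + 1 / q) (hnu : nu / r = lam / p + mu / q)
    (f g : (Fin n → ℝ) → ℝ)
    (hf : AEStronglyMeasurable f volume) (hg : AEStronglyMeasurable g volume)
    (hfM : morreyNorm n p lam f < ∞) (hgM : morreyNorm n q mu g < ∞) :
    morreyNorm n r nu (fun x => f x * g x) < ∞ ∧
      morreyNorm n r nu (fun x => f x * g x) ≤
        morreyNorm n p lam f * morreyNorm n q mu g :=
  stmt_1_general n p q r lam mu nu hp hq hr hnu f g hf hg hfM hgM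
end

section
/- Lemma on intermediate terms (Lerner–Lorist–Ombrosi): let 1 ≤ r, t < ∞, m ∈ ℕ⁺, Q a cube in ℝⁿ, f, g bounded with compact support, b locally integrable. For 0 ≤ k ≤ m define c_k := ⟨|b − ⟨b⟩_Q|^{m−k} |f|⟩_{r,Q} · ⟨|b − ⟨b⟩_Q|^{k} |g|⟩_{t,Q}. Then c_k ≤ c₀ + c_m for every 0 ≤ k ≤ m. -/
open MeasureTheory ENNReal

/-- The (closed) cube in ℝⁿ with lower corner `a` and side length `ℓ`. -/
def cube (n : ℕ) (a : Fin n → ℝ) (ℓ : ℝ) : Set (Fin n → ℝ) :=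
  {y | ∀ i, a i ≤ y i ∧ y i ≤ a i + ℓ}

/-- Average `⟨b⟩_Q = |Q|⁻¹ ∫_Q b`. -/
noncomputable def cubeAvg (n : ℕ) (Q : Set (Fin n → ℝ)) (b : (Fin n → ℝ) → ℝ) : ℝ :=
  (∫ y in Q, b y) / (volume Q).toReal

/-- The `s`-average `⟨h⟩_{s,Q} = (|Q|⁻¹ ∫_Q |h|^s)^{1/s}`. -/
noncomputable def sAvg (n : ℕ) (s : ℝ) (Q : Set (Fin n → ℝ))
    (h : (Fin n → ℝ) → ℝ) : ℝ≥0∞ :=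
  ((volume Q)⁻¹ * ∫⁻ y in Q, ENNReal.ofReal |h y| ^ s) ^ (1 / s)

/-- `c_k = ⟨|b - ⟨b⟩_Q|^{m-k} |f|⟩_{r,Q} · ⟨|b - ⟨b⟩_Q|^{k} |g|⟩_{t,Q}`. -/
noncomputable def ck (n m : ℕ) (r t : ℝ) (Q : Set (Fin n → ℝ))
    (b f g : (Fin n → ℝ) → ℝ) (k : ℕ) : ℝ≥0∞ :=
  sAvg n r Q (fun y => |b y - cubeAvg n Q b| ^ (m - k) * |f y|) *
    sAvg n t Q (fun y => |b y - cubeAvg n Q b| ^ k * |g y|)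

/-! The exponent `k` of `|b - ⟨b⟩_Q|` interpolates between `0` and `m`, and by Hölder's inequality
`j ↦ ∫_Q |b - ⟨b⟩_Q|^{j s} |h|^s` is log-convex. Writing `θ = (m - k) / m`, this gives
`c_k ≤ c_0^θ c_m^{1-θ}`, a weighted geometric mean, which is at most `c_0 + c_m`. -/

namespace ENNReal

theorem rpow_mul_rpow_one_sub_le_add (x y : ℝ≥0∞) {θ : ℝ} (h0 : 0 ≤ θ) (h1 : θ ≤ 1) :
    x ^ θ * y ^ (1 - θ) ≤ x + y :=
  calc x ^ θ * y ^ (1 - θ) ≤ max x y ^ θ * max x y ^ (1 - θ) :=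
        mul_le_mul' (rpow_le_rpow (le_max_left x y) h0)
          (rpow_le_rpow (le_max_right x y) (by linarith))
    _ = max x y := by rw [← rpow_add_of_nonneg _ _ h0 (by linarith)]; simp
    _ ≤ x + y := max_le le_self_add le_add_self

theorem mul_rpow_mul_rpow_one_sub (c x y : ℝ≥0∞) {θ : ℝ} (h0 : 0 ≤ θ) (h1 : θ ≤ 1) :
    c * (x ^ θ * y ^ (1 - θ)) = (c * x) ^ θ * (c * y) ^ (1 - θ) := by
  rw [mul_rpow_of_nonneg _ _ h0, mul_rpow_of_nonneg _ _ (by linarith),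
    mul_mul_mul_comm, ← rpow_add_of_nonneg _ _ h0 (by linarith)]
  simp

theorem lintegral_rpow_mul_le_geom_mean {α : Type*} [MeasurableSpace α] {μ : Measure α}
    {A H : α → ℝ≥0∞} (hA : AEMeasurable A μ) (hH : AEMeasurable H μ)
    {p q θ : ℝ} (hp : 0 ≤ p) (hq : 0 ≤ q) (h0 : 0 ≤ θ) (h1 : θ ≤ 1) :
    ∫⁻ x, A x ^ (θ * p + (1 - θ) * q) * H x ∂μ ≤
      (∫⁻ x, A x ^ p * H x ∂μ) ^ θ * (∫⁻ x, A x ^ q * H x ∂μ) ^ (1 - θ) := by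
  have h1' : 0 ≤ 1 - θ := by linarith
  calc ∫⁻ x, A x ^ (θ * p + (1 - θ) * q) * H x ∂μ
      = ∫⁻ x, (A x ^ p * H x) ^ θ * (A x ^ q * H x) ^ (1 - θ) ∂μ := by
        refine lintegral_congr fun x => ?_
        rw [mul_rpow_of_nonneg _ _ h0, mul_rpow_of_nonneg _ _ h1', mul_mul_mul_comm,
          ← rpow_add_of_nonneg _ _ h0 h1', ← rpow_mul, ← rpow_mul,
          ← rpow_add_of_nonneg _ _ (by positivity) (by positivity)]
        simp [mul_comm]
    _ ≤ _ := lintegral_mul_norm_pow_le ((hA.pow_const p).mul hH) ((hA.pow_const q).mul hH)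
        h0 h1' (by ring)

end ENNReal

theorem sAvg_abs_pow_mul_eq {n : ℕ} {s : ℝ} (hs : 0 ≤ s) (Q : Set (Fin n → ℝ))
    (u h : (Fin n → ℝ) → ℝ) (j : ℕ) :
    sAvg n s Q (fun y => |u y| ^ j * |h y|) =
      ((volume Q)⁻¹ *
        ∫⁻ y in Q, ENNReal.ofReal |u y| ^ ((j : ℝ) * s) * ENNReal.ofReal |h y| ^ s) ^ (1 / s) := by
  unfold sAvg
  congr 2
  refine lintegral_congr fun y => ?_
  rw [abs_mul, abs_pow, abs_abs, abs_abs, ENNReal.ofReal_mul (by positivity),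
    ENNReal.ofReal_pow (abs_nonneg _), ENNReal.mul_rpow_of_nonneg _ _ hs,
    ← ENNReal.rpow_natCast, ← ENNReal.rpow_mul]

theorem sAvg_abs_pow_mul_le_geom_mean {n : ℕ} {s θ : ℝ} {Q : Set (Fin n → ℝ)}
    {u h : (Fin n → ℝ) → ℝ} (hu : AEMeasurable u (volume.restrict Q))
    (hh : AEMeasurable h (volume.restrict Q)) (hs : 0 < s) (h0 : 0 ≤ θ) (h1 : θ ≤ 1)
    {i j k : ℕ} (hk : (k : ℝ) = θ * i + (1 - θ) * j) :
    sAvg n s Q (fun y => |u y| ^ k * |h y|) ≤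
      sAvg n s Q (fun y => |u y| ^ i * |h y|) ^ θ *
        sAvg n s Q (fun y => |u y| ^ j * |h y|) ^ (1 - θ) := by
  simp only [sAvg_abs_pow_mul_eq hs.le]
  set I : ℝ → ℝ≥0∞ := fun e =>
    (volume Q)⁻¹ * ∫⁻ y in Q, ENNReal.ofReal |u y| ^ e * ENNReal.ofReal |h y| ^ s
  have hA : AEMeasurable (fun y => ENNReal.ofReal |u y|) (volume.restrict Q) :=
    hu.abs.ennreal_ofReal
  have hH : AEMeasurable (fun y => ENNReal.ofReal |h y| ^ s) (volume.restrict Q) :=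
    hh.abs.ennreal_ofReal.pow_const s
  have hI : I (k * s) ≤ I (i * s) ^ θ * I (j * s) ^ (1 - θ) := by
    have hks : (k : ℝ) * s = θ * (i * s) + (1 - θ) * (j * s) := by rw [hk]; ring
    rw [hks, ← ENNReal.mul_rpow_mul_rpow_one_sub _ _ _ h0 h1]
    exact mul_le_mul_right
      (ENNReal.lintegral_rpow_mul_le_geom_mean hA hH (by positivity) (by positivity) h0 h1) _
  calc I (k * s) ^ (1 / s) ≤ (I (i * s) ^ θ * I (j * s) ^ (1 - θ)) ^ (1 / s) := by gcongr
    _ = _ := by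
      rw [ENNReal.mul_rpow_of_nonneg _ _ (by positivity), ← ENNReal.rpow_mul, ← ENNReal.rpow_mul,
        ← ENNReal.rpow_mul, ← ENNReal.rpow_mul, mul_comm θ, mul_comm (1 - θ)]

theorem stmt_10_general (n m : ℕ) (r t : ℝ) (hr : 1 ≤ r) (ht : 1 ≤ t)
    (a : Fin n → ℝ) (ℓ : ℝ)
    (f g b : (Fin n → ℝ) → ℝ)
    (hfm : Measurable f) (hgm : Measurable g)
    (hb : LocallyIntegrable b volume)
    (k : ℕ) (hk : k ≤ m) :
    ck n m r t (cube n a ℓ) b f g k ≤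
      ck n m r t (cube n a ℓ) b f g 0 + ck n m r t (cube n a ℓ) b f g m := by
  set Q := cube n a ℓ
  set θ : ℝ := ((m : ℝ) - k) / m
  have hθ0 : 0 ≤ θ := div_nonneg (by simp [hk]) m.cast_nonneg
  have hθ1 : θ ≤ 1 := div_le_one_of_le₀ (by simp) m.cast_nonneg
  have hθm : θ * m = m - k := by
    rcases m.eq_zero_or_pos with rfl | hm
    · simp [Nat.le_zero.mp hk]
    · exact div_mul_cancel₀ _ (by positivity)
  have hu : AEMeasurable (fun y => b y - cubeAvg n Q b) (volume.restrict Q) :=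
    hb.aestronglyMeasurable.aemeasurable.restrict.sub_const _
  have hF := sAvg_abs_pow_mul_le_geom_mean (s := r) hu hfm.aemeasurable (by linarith) hθ0 hθ1
    (i := m) (j := 0) (k := m - k) (by push_cast [hk]; linarith)
  have hG := sAvg_abs_pow_mul_le_geom_mean (s := t) hu hgm.aemeasurable (by linarith) hθ0 hθ1
    (i := 0) (j := m) (k := k) (by push_cast; linarith)
  calc ck n m r t Q b f g k
      ≤ ck n m r t Q b f g 0 ^ θ * ck n m r t Q b f g m ^ (1 - θ) := by
        simp only [ck, Nat.sub_zero, Nat.sub_self]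
        rw [ENNReal.mul_rpow_of_nonneg _ _ hθ0, ENNReal.mul_rpow_of_nonneg _ _ (by linarith),
          mul_mul_mul_comm]
        exact mul_le_mul' hF hG
    _ ≤ _ := ENNReal.rpow_mul_rpow_one_sub_le_add _ _ hθ0 hθ1

/-- Lerner–Lorist–Ombrosi: `c_k ≤ c₀ + c_m` for `0 ≤ k ≤ m`. -/
theorem stmt_10 (n m : ℕ) (hm : 0 < m) (r t : ℝ) (hr : 1 ≤ r) (ht : 1 ≤ t)
    (a : Fin n → ℝ) (ℓ : ℝ) (hℓ : 0 < ℓ)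
    (f g b : (Fin n → ℝ) → ℝ)
    (hfm : Measurable f) (hgm : Measurable g)
    (hfb : ∃ M, ∀ x, |f x| ≤ M) (hgb : ∃ M, ∀ x, |g x| ≤ M)
    (hfs : HasCompactSupport f) (hgs : HasCompactSupport g)
    (hb : LocallyIntegrable b volume)
    (k : ℕ) (hk : k ≤ m) :
    ck n m r t (cube n a ℓ) b f g k ≤
      ck n m r t (cube n a ℓ) b f g 0 + ck n m r t (cube n a ℓ) b f g m :=
  stmt_10_general n m r t hr ht a ℓ f g b hfm hgm hb k hk
end

section
/- Rubio de Francia iteration algorithm properties: let Y be a Banach space of measurable functions on which the Hardy–Littlewood maximal operator M is bounded with operator norm ‖M‖_Y. For locally integrable h define ℛh := Σ_{k=0}^∞ M^k h / (2^k ‖M‖_Y^k), where M⁰h = |h|. Then (i) |h| ≤ ℛh pointwise; (ii) ‖ℛh‖_Y ≤ 2‖h‖_Y; (iii) M(ℛh) ≤ 2‖M‖_Y · ℛh pointwise, i.e. ℛh is an A₁ weight with [ℛh]_{A₁} ≤ 2‖M‖_Y. -/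
open MeasureTheory ENNReal

/-- Hardy–Littlewood maximal operator on ℝ≥0∞-valued functions,
`Mf(x) = sup_{Q ∋ x} |Q|⁻¹ ∫_Q f`. -/
noncomputable def maxOpE (n : ℕ) (f : (Fin n → ℝ) → ℝ≥0∞) (x : Fin n → ℝ) : ℝ≥0∞ :=
  ⨆ (a : Fin n → ℝ) (ℓ : ℝ) (_ : 0 < ℓ) (_ : x ∈ cube n a ℓ),
    (volume (cube n a ℓ))⁻¹ * ∫⁻ y in cube n a ℓ, f y

/-- The Rubio de Francia iteration `ℛh = Σ_k M^k h / (2^k K^k)`. -/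
noncomputable def rubioR (n : ℕ) (K : ℝ≥0∞) (h : (Fin n → ℝ) → ℝ≥0∞)
    (x : Fin n → ℝ) : ℝ≥0∞ :=
  ∑' k : ℕ, (maxOpE n)^[k] h x / (2 ^ k * K ^ k)

/-!
Write `q = (2K)⁻¹`, so that `ℛh = ∑ qᵏ Mᵏh`. Part (i) is the term `k = 0`. Part (ii) follows from
the countable subadditivity and homogeneity of `N`: `N(qᵏ Mᵏh) ≤ (qK)ᵏ N h = 2⁻ᵏ N h`. For (iii),
`M` is countably subadditive on `∑ qᵏ Mᵏh`, because every term but the first (`h`, which need not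
be measurable) is lower semicontinuous; hence `M(ℛh) ≤ ∑ qᵏ Mᵏ⁺¹h ≤ q⁻¹ ℛh`.
-/

open Filter Topology

lemma cube_eq_pi (n : ℕ) (a : Fin n → ℝ) (ℓ : ℝ) :
    cube n a ℓ = Set.univ.pi fun i => Set.Icc (a i) (a i + ℓ) := by
  ext y
  simp only [cube, Set.mem_ofPred_eq, Set.mem_pi, Set.mem_univ, Set.mem_Icc, true_imp_iff]

lemma volume_cube (n : ℕ) (a : Fin n → ℝ) (ℓ : ℝ) :
    volume (cube n a ℓ) = ENNReal.ofReal ℓ ^ n := by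
  rw [cube_eq_pi, volume_pi_pi]
  simp [Real.volume_Icc]

lemma cube_average_le_maxOpE {n : ℕ} (f : (Fin n → ℝ) → ℝ≥0∞) {x a : Fin n → ℝ} {ℓ : ℝ}
    (hℓ : 0 < ℓ) (hx : x ∈ cube n a ℓ) :
    (volume (cube n a ℓ))⁻¹ * ∫⁻ y in cube n a ℓ, f y ≤ maxOpE n f x :=
  le_iSup₂_of_le a ℓ <| le_iSup₂_of_le hℓ hx le_rfl

/-- A point of a closed cube lies in the interior of the cube enlarged by `δ` on every side,
whose average of `f` tends to that of the original cube as `δ → 0`. -/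
theorem lowerSemicontinuous_maxOpE (n : ℕ) (f : (Fin n → ℝ) → ℝ≥0∞) :
    LowerSemicontinuous (maxOpE n f) := by
  intro x t ht
  obtain ⟨a, ℓ, hℓ, hx, hlt⟩ : ∃ a ℓ, 0 < ℓ ∧ x ∈ cube n a ℓ ∧
      t < (volume (cube n a ℓ))⁻¹ * ∫⁻ y in cube n a ℓ, f y := by
    simpa only [maxOpE, lt_iSup_iff, exists_prop] using ht
  have hlim : Tendsto (fun δ : ℝ => (ENNReal.ofReal (ℓ + 2 * δ) ^ n)⁻¹ *
      ∫⁻ y in cube n a ℓ, f y) (𝓝[>] 0)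
      (𝓝 ((volume (cube n a ℓ))⁻¹ * ∫⁻ y in cube n a ℓ, f y)) := by
    have hcont : Continuous fun δ : ℝ => (ENNReal.ofReal (ℓ + 2 * δ) ^ n)⁻¹ :=
      continuous_inv.comp <| (ENNReal.continuous_pow n).comp <|
        ENNReal.continuous_ofReal.comp (by fun_prop)
    refine ENNReal.Tendsto.mul_const ((hcont.tendsto' 0 _ ?_).mono_left nhdsWithin_le_nhds)
      (Or.inl ?_) <;> simp [volume_cube]
  obtain ⟨δ, hδt, hδ : 0 < δ⟩ :=
    ((hlim.eventually_const_lt hlt).and self_mem_nhdsWithin).exists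
  filter_upwards [Metric.ball_mem_nhds x hδ] with y hy
  have hcoord : ∀ i, |y i - x i| < δ := fun i =>
    (dist_le_pi_dist y x i).trans_lt (Metric.mem_ball.mp hy)
  have hsub : cube n a ℓ ⊆ cube n (fun i => a i - δ) (ℓ + 2 * δ) := fun z hz i => by
    constructor <;> linarith [(hz i).1, (hz i).2]
  have hy' : y ∈ cube n (fun i => a i - δ) (ℓ + 2 * δ) := fun i => by
    have := abs_lt.mp (hcoord i)
    constructor <;> linarith [(hx i).1, (hx i).2]
  calc t < (ENNReal.ofReal (ℓ + 2 * δ) ^ n)⁻¹ * ∫⁻ z in cube n a ℓ, f z := hδt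
    _ ≤ (volume (cube n (fun i => a i - δ) (ℓ + 2 * δ)))⁻¹ *
          ∫⁻ z in cube n (fun i => a i - δ) (ℓ + 2 * δ), f z := by
      rw [volume_cube]
      gcongr
    _ ≤ maxOpE n f y := cube_average_le_maxOpE f (by linarith) hy'

theorem measurable_maxOpE (n : ℕ) (f : (Fin n → ℝ) → ℝ≥0∞) : Measurable (maxOpE n f) :=
  (lowerSemicontinuous_maxOpE n f).measurable

lemma maxOpE_const_mul (n : ℕ) {c : ℝ≥0∞} (hc : c ≠ ∞) (f : (Fin n → ℝ) → ℝ≥0∞)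
    (x : Fin n → ℝ) : maxOpE n (fun y => c * f y) x = c * maxOpE n f x := by
  simp only [maxOpE, ENNReal.mul_iSup, lintegral_const_mul' c _ hc, mul_left_comm c]

lemma lintegral_tsum_of_aemeasurable_succ {α : Type*} [MeasurableSpace α] {μ : Measure α}
    {g : ℕ → α → ℝ≥0∞} (hg : ∀ k, AEMeasurable (g (k + 1)) μ) :
    ∫⁻ y, ∑' k, g k y ∂μ = ∑' k, ∫⁻ y, g k y ∂μ := by
  calc ∫⁻ y, ∑' k, g k y ∂μ = ∫⁻ y, g 0 y + ∑' k, g (k + 1) y ∂μ :=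
        lintegral_congr fun _ => tsum_eq_zero_add' ENNReal.summable
    _ = ∫⁻ y, g 0 y ∂μ + ∑' k, ∫⁻ y, g (k + 1) y ∂μ := by
        rw [lintegral_add_right' _ (AEMeasurable.tsum hg), lintegral_tsum hg]
    _ = ∑' k, ∫⁻ y, g k y ∂μ := (tsum_eq_zero_add' (f := fun k => ∫⁻ y, g k y ∂μ) ENNReal.summable).symm

lemma maxOpE_tsum_le (n : ℕ) {g : ℕ → (Fin n → ℝ) → ℝ≥0∞}
    (hg : ∀ k, Measurable (g (k + 1))) (x : Fin n → ℝ) :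
    maxOpE n (fun y => ∑' k, g k y) x ≤ ∑' k, maxOpE n (g k) x := by
  refine iSup₂_le fun a ℓ => iSup₂_le fun hℓ hx => ?_
  rw [lintegral_tsum_of_aemeasurable_succ fun k => (hg k).aemeasurable,
    ← ENNReal.tsum_mul_left]
  exact ENNReal.tsum_le_tsum fun k => cube_average_le_maxOpE (g k) hℓ hx

section Iteration

variable {α : Type*} {N : (α → ℝ≥0∞) → ℝ≥0∞} {T : (α → ℝ≥0∞) → α → ℝ≥0∞} {K : ℝ≥0∞}

lemma iterate_le_pow_mul (hT : ∀ f, N (T f) ≤ K * N f) (f : α → ℝ≥0∞) (k : ℕ) :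
    N (T^[k] f) ≤ K ^ k * N f := by
  induction k with
  | zero => simp
  | succ k ih =>
    rw [Function.iterate_succ_apply', pow_succ', mul_assoc]
    exact (hT _).trans (mul_le_mul_right ih K)

lemma apply_tsum_iterate_le_two_mul (hK0 : K ≠ 0) (hKtop : K ≠ ∞)
    (hNsub : ∀ g : ℕ → α → ℝ≥0∞, N (fun x => ∑' k, g k x) ≤ ∑' k, N (g k))
    (hNsmul : ∀ (c : ℝ≥0∞) (f : α → ℝ≥0∞), N (fun x => c * f x) = c * N f)
    (hT : ∀ f, N (T f) ≤ K * N f) (h : α → ℝ≥0∞) :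
    N (fun x => ∑' k, (2 * K)⁻¹ ^ k * T^[k] h x) ≤ 2 * N h := by
  have hqK : (2 * K)⁻¹ * K = 2⁻¹ := by
    rw [ENNReal.mul_inv (by simp) (by simp), mul_assoc, ENNReal.inv_mul_cancel hK0 hKtop,
      mul_one]
  calc N (fun x => ∑' k, (2 * K)⁻¹ ^ k * T^[k] h x)
      ≤ ∑' k, N (fun x => (2 * K)⁻¹ ^ k * T^[k] h x) := hNsub _
    _ = ∑' k, (2 * K)⁻¹ ^ k * N (T^[k] h) := tsum_congr fun k => hNsmul _ _
    _ ≤ ∑' k, (2 * K)⁻¹ ^ k * (K ^ k * N h) := by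
      gcongr with k
      exact iterate_le_pow_mul hT h k
    _ = ∑' k, 2⁻¹ ^ k * N h := by simp_rw [← mul_assoc, ← mul_pow, hqK]
    _ = 2 * N h := by
      rw [ENNReal.tsum_mul_right, ENNReal.tsum_geometric, ENNReal.one_sub_inv_two, inv_inv]

end Iteration

lemma tsum_pow_mul_succ_le {q : ℝ≥0∞} (hq0 : q ≠ 0) (hqtop : q ≠ ∞) (u : ℕ → ℝ≥0∞) :
    ∑' k, q ^ k * u (k + 1) ≤ q⁻¹ * ∑' k, q ^ k * u k := by
  calc ∑' k, q ^ k * u (k + 1) = ∑' k, q⁻¹ * (q ^ (k + 1) * u (k + 1)) :=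
        tsum_congr fun k => by
          rw [pow_succ', ← mul_assoc, ← mul_assoc, ENNReal.inv_mul_cancel hq0 hqtop, one_mul]
    _ ≤ q⁻¹ * ∑' k, q ^ k * u k := by
      rw [ENNReal.tsum_mul_left]
      exact mul_le_mul_right
        (ENNReal.tsum_comp_le_tsum_of_injective (add_left_injective 1) fun k => q ^ k * u k) _

lemma rubioR_eq_tsum (n : ℕ) (K : ℝ≥0∞) (h : (Fin n → ℝ) → ℝ≥0∞) (x : Fin n → ℝ) :
    rubioR n K h x = ∑' k, (2 * K)⁻¹ ^ k * (maxOpE n)^[k] h x :=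
  tsum_congr fun k => by rw [← mul_pow, div_eq_mul_inv, ENNReal.inv_pow, mul_comm]

theorem maxOpE_rubioR_le (n : ℕ) {K : ℝ≥0∞} (hK0 : K ≠ 0) (hKtop : K ≠ ∞)
    (h : (Fin n → ℝ) → ℝ≥0∞) (x : Fin n → ℝ) :
    maxOpE n (rubioR n K h) x ≤ 2 * K * rubioR n K h x := by
  set q := (2 * K)⁻¹
  have hq0 : q ≠ 0 := ENNReal.inv_ne_zero.2 (ENNReal.mul_ne_top ENNReal.ofNat_ne_top hKtop)
  have hqtop : q ≠ ∞ := ENNReal.inv_ne_top.2 (mul_ne_zero two_ne_zero hK0)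
  have hmeas : ∀ k, Measurable fun y => q ^ (k + 1) * (maxOpE n)^[k + 1] h y := fun k => by
    rw [Function.iterate_succ']
    exact (measurable_maxOpE n _).const_mul _
  calc maxOpE n (rubioR n K h) x
      = maxOpE n (fun y => ∑' k, q ^ k * (maxOpE n)^[k] h y) x := by
        rw [funext (rubioR_eq_tsum n K h)]
    _ ≤ ∑' k, maxOpE n (fun y => q ^ k * (maxOpE n)^[k] h y) x := maxOpE_tsum_le n hmeas x
    _ = ∑' k, q ^ k * (maxOpE n)^[k + 1] h x := tsum_congr fun k => by
        rw [maxOpE_const_mul n (ENNReal.pow_ne_top hqtop), Function.iterate_succ_apply']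
    _ ≤ q⁻¹ * ∑' k, q ^ k * (maxOpE n)^[k] h x := tsum_pow_mul_succ_le hq0 hqtop _
    _ = 2 * K * rubioR n K h x := by rw [inv_inv, rubioR_eq_tsum]

/-- properties of the Rubio de Francia algorithm: (i) `h ≤ ℛh`;
(ii) `‖ℛh‖_Y ≤ 2‖h‖_Y`; (iii) `M(ℛh) ≤ 2K·ℛh`, i.e. `[ℛh]_{A₁} ≤ 2‖M‖_Y`. -/
theorem stmt_13 (n : ℕ) (N : ((Fin n → ℝ) → ℝ≥0∞) → ℝ≥0∞) (K : ℝ≥0∞)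
    (hK0 : 0 < K) (hKtop : K ≠ ∞)
    (hNsub : ∀ g : ℕ → (Fin n → ℝ) → ℝ≥0∞,
      N (fun x => ∑' k, g k x) ≤ ∑' k, N (g k))
    (hNsmul : ∀ (c : ℝ≥0∞) (f : (Fin n → ℝ) → ℝ≥0∞),
      N (fun x => c * f x) = c * N f)
    (hM : ∀ f, N (maxOpE n f) ≤ K * N f)
    (h : (Fin n → ℝ) → ℝ≥0∞) :
    (∀ x, h x ≤ rubioR n K h x) ∧
      N (rubioR n K h) ≤ 2 * N h ∧
      ∀ x, maxOpE n (rubioR n K h) x ≤ 2 * K * rubioR n K h x := by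
  refine ⟨fun x => ?_, ?_, maxOpE_rubioR_le n hK0.ne' hKtop h⟩
  · simpa [rubioR] using ENNReal.le_tsum (f := fun k => (maxOpE n)^[k] h x / (2 ^ k * K ^ k)) 0
  · rw [funext (rubioR_eq_tsum n K h)]
    exact apply_tsum_iterate_le_two_mul hK0.ne' hKtop hNsub hNsmul hM h
end
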